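/- Let P(X) = Σ_{I ⊆ [n]} a_I X^I be a multilinear polynomial of degree at most d, let 1 ≤ K < n, and for x = (x_1,…,x_K) ∈ {-1,1}^K write the restricted polynomial as P_x(Y_{K+1},…,Y_n) = R(x) + Σ_{J ⊆ {K+1,…,n}, 0 < |J| ≤ d} Q_J(x) · Π_{j∈J} Y_j, where R and the Q_J are multilinear polynomials in x_1,…,x_K. For j > K let w_j²(P_x) = Σ_{J ∋ j} Q_J(x)². Then for X uniform on {-1,1}^K and every j > K, E_X[ w_j⁴(P_X) ] ≤ 9^d · w_j⁴(P), where w_j²(P) = Σ_{I ∋ j} a_I². -/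

import Mathlib

open Finset MeasureTheory ProbabilityTheory
open scoped Classical

noncomputable section

/-- The ±1 real value of a Boolean bit (`true ↦ 1`, `false ↦ -1`). -/
def pmOne (b : Bool) : ℝ := if b then 1 else -1

/-- Noise sensitivity at rate `δ` of a Boolean function on the hypercube `{-1,1}^n`:
`Pr[f(X) ≠ f(Z)]` where `X` is uniform and `Z` flips each coordinate of `X`
independently with probability `δ`. -/
def noiseSens {n : ℕ} (δ : ℝ) (f : (Fin n → Bool) → Bool) : ℝ :=
  (1 / 2 ^ n : ℝ) * ∑ x : Fin n → Bool, ∑ s : Fin n → Bool,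
    (∏ i, if s i then δ else 1 - δ) * (if f x ≠ f (fun i => xor (s i) (x i)) then 1 else 0)

/-- Influence of the `i`-th variable: `Pr[f(X) ≠ f(X^{(i)})]`. -/
def influence {n : ℕ} (f : (Fin n → Bool) → Bool) (i : Fin n) : ℝ :=
  (1 / 2 ^ n : ℝ) * ∑ x : Fin n → Bool,
    if f x ≠ f (Function.update x i (!x i)) then 1 else 0

/-- Average sensitivity (total influence). -/
def avgSens {n : ℕ} (f : (Fin n → Bool) → Bool) : ℝ := ∑ i, influence f i

/-- `f` is a degree-`d` polynomial threshold function: `f = sign(P)` for some real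
polynomial of total degree at most `d`, with the convention `sign 0 = 1`. -/
def IsPTF {n : ℕ} (d : ℕ) (f : (Fin n → Bool) → Bool) : Prop :=
  ∃ P : MvPolynomial (Fin n) ℝ, P.totalDegree ≤ d ∧
    ∀ x, (f x = true ↔ 0 ≤ MvPolynomial.eval (fun i => pmOne (x i)) P)

/-- Evaluation of the multilinear polynomial with coefficients `a` at the point `x`. -/
def mlEval {n : ℕ} (a : Finset (Fin n) → ℝ) (x : Fin n → ℝ) : ℝ :=
  ∑ I : Finset (Fin n), a I * ∏ i ∈ I, x i

/-- The multilinear polynomial with coefficients `a` has degree at most `d`. -/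
def DegLE {n : ℕ} (a : Finset (Fin n) → ℝ) (d : ℕ) : Prop :=
  ∀ I, a I ≠ 0 → I.card ≤ d

/-- Squared weight `w_i²` of coordinate `i`: `Σ_{I ∋ i} a_I²`. -/
def wsq {n : ℕ} (a : Finset (Fin n) → ℝ) (i : Fin n) : ℝ :=
  ∑ I ∈ univ.filter (fun I : Finset (Fin n) => i ∈ I), a I ^ 2

/-- `ε`-regularity: `Σ_i w_i⁴ ≤ ε² (Σ_i w_i²)²`. -/
def Regular {n : ℕ} (a : Finset (Fin n) → ℝ) (ε : ℝ) : Prop :=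
  ∑ i, wsq a i ^ 2 ≤ ε ^ 2 * (∑ i, wsq a i) ^ 2

/-- `σ_{k+1}²(P) = Σ_{j ≥ k (0-based)} w_j²` (tail weight, `k` restricted variables). -/
def sigmaSq {n : ℕ} (a : Finset (Fin n) → ℝ) (k : ℕ) : ℝ :=
  ∑ j ∈ univ.filter (fun j : Fin n => k ≤ (j : ℕ)), wsq a j

/-- The variables are ordered by decreasing weight. -/
def OrderedWeights {n : ℕ} (a : Finset (Fin n) → ℝ) : Prop :=
  ∀ i j : Fin n, i ≤ j → wsq a j ≤ wsq a i

/-- The `ε`-critical index `K(P,ε)`: least `k` such that `w_j² ≤ ε² σ_{k+1}²` for all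
`j` beyond the first `k` variables. -/
def critIndex {n : ℕ} (a : Finset (Fin n) → ℝ) (ε : ℝ) : ℕ :=
  sInf {k : ℕ | ∀ j : Fin n, k ≤ (j : ℕ) → wsq a j ≤ ε ^ 2 * sigmaSq a k}

/-- Coefficients (in the variables `Y_j`, `j ≥ K`) of the restriction of the multilinear
polynomial `a` obtained by fixing the first `K` variables to `x`. -/
def restCoeff {n : ℕ} (a : Finset (Fin n) → ℝ) (K : ℕ) (x : Fin n → ℝ)
    (J : Finset (Fin n)) : ℝ :=
  if ∀ j ∈ J, K ≤ (j : ℕ) then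
    ∑ I ∈ univ.filter (fun I : Finset (Fin n) => I.filter (fun i => K ≤ i.val) = J),
      a I * ∏ i ∈ I.filter (fun i => i.val < K), x i
  else 0

/-- Standard Gaussian measure on `ℝ^n`. -/
def gaussn (n : ℕ) : Measure (Fin n → ℝ) := Measure.pi fun _ => gaussianReal 0 1

/-- Gaussian noise sensitivity: `Pr[f(X) ≠ f((1-δ)X + √(2δ-δ²)Y)]` for independent
standard Gaussian vectors `X, Y`. -/
def gns (n : ℕ) (δ : ℝ) (f : (Fin n → ℝ) → ℝ) : ℝ :=
  (((gaussn n).prod (gaussn n))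
    {p | f p.1 ≠ f (fun i => (1 - δ) * p.1 i + Real.sqrt (2 * δ - δ ^ 2) * p.2 i)}).toReal

/-- Normalized probabilists' Hermite polynomial `H_k(x)`. -/
def normHermite (k : ℕ) (x : ℝ) : ℝ :=
  Polynomial.aeval x (Polynomial.hermite k) / Real.sqrt (Nat.factorial k)

/-! Each `Q_J` is a multilinear polynomial of degree at most `d`, and
`w_j²(P_x) = Σ_{J ∋ j} Q_J(x)²`. Expanding the square, `E[w_j⁴(P_X)] = Σ_{J,J'} E[Q_J² Q_J'²]`,
and by Cauchy–Schwarz and Bonami's lemma `E[Q⁴] ≤ 9^d E[Q²]²` each term is at most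
`9^d E[Q_J²] E[Q_J'²]`. By Parseval, `Σ_{J ∋ j} E[Q_J²] = w_j²(P)`.

Bonami's lemma is proved by induction on the variables: writing `Q = G + x_i H` with `G`, `H`
independent of `x_i` and `deg H < deg Q`, the odd moments of `x_i` vanish, so
`E[Q²] = E[G²] + E[H²]` and `E[Q⁴] = E[G⁴] + 6 E[G²H²] + E[H⁴]`. -/

section Hypercube

variable {n : ℕ}

def mlEvalCube (a : Finset (Fin n) → ℝ) (x : Fin n → Bool) : ℝ :=
  mlEval a fun i => pmOne (x i)

lemma pmOne_not (b : Bool) : pmOne (!b) = -pmOne b := by cases b <;> simp [pmOne]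

lemma pmOne_mul_self (b : Bool) : pmOne b * pmOne b = 1 := by cases b <;> simp [pmOne]

lemma sum_pmOne_mul_eq_zero (i : Fin n) (u : (Fin n → Bool) → ℝ)
    (hu : ∀ x b, u (Function.update x i b) = u x) :
    ∑ x, pmOne (x i) * u x = 0 := by
  let flip : Equiv.Perm (Fin n → Bool) :=
    Function.Involutive.toPerm (fun x => Function.update x i (!x i)) fun x => by simp
  have hflip : ∀ x, pmOne (flip x i) * u (flip x) = -(pmOne (x i) * u x) := fun x => by
    change pmOne (Function.update x i (!x i) i) * u (Function.update x i (!x i)) = _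
    rw [Function.update_self, hu, pmOne_not, neg_mul]
  have h := Equiv.sum_comp flip fun x => pmOne (x i) * u x
  simp only [hflip, Finset.sum_neg_distrib] at h
  linarith

lemma sum_prod_pmOne (T : Finset (Fin n)) :
    ∑ x : Fin n → Bool, ∏ i ∈ T, pmOne (x i) = if T = ∅ then 2 ^ n else 0 := by
  split_ifs with hT
  · simp [hT]
  · obtain ⟨i, hi⟩ := Finset.nonempty_iff_ne_empty.mpr hT
    rw [Finset.sum_congr rfl fun x _ => (Finset.mul_prod_erase T (fun k => pmOne (x k)) hi).symm]
    exact sum_pmOne_mul_eq_zero i _ fun x b => Finset.prod_congr rfl fun k hk => by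
      rw [Function.update_of_ne (Finset.ne_of_mem_erase hk)]

lemma prod_pmOne_mul_prod_pmOne (I I' : Finset (Fin n)) (x : Fin n → Bool) :
    (∏ i ∈ I, pmOne (x i)) * ∏ i ∈ I', pmOne (x i) = ∏ i ∈ symmDiff I I', pmOne (x i) := by
  rw [← Finset.prod_union_inter, ← Finset.sup_eq_union, ← symmDiff_sup_inf, Finset.sup_eq_union,
    Finset.prod_union (disjoint_symmDiff_inf I I'), Finset.inf_eq_inter,
    mul_assoc, ← Finset.prod_mul_distrib, Finset.prod_congr rfl fun k _ => pmOne_mul_self (x k),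
    Finset.prod_const_one, mul_one]

theorem sum_mlEvalCube_sq (c : Finset (Fin n) → ℝ) :
    ∑ x, mlEvalCube c x ^ 2 = 2 ^ n * ∑ I, c I ^ 2 := by
  have hexpand : ∀ x, mlEvalCube c x ^ 2 =
      ∑ I, ∑ I', c I * c I' * ∏ i ∈ symmDiff I I', pmOne (x i) := fun x => by
    rw [sq, mlEvalCube, mlEval, Finset.sum_mul_sum]
    simp only [← prod_pmOne_mul_prod_pmOne, mul_mul_mul_comm]
  have hdiag : ∀ I : Finset (Fin n),
      ∑ I', c I * c I' * ∑ x : Fin n → Bool, ∏ i ∈ symmDiff I I', pmOne (x i) = 2 ^ n * c I ^ 2 :=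
    fun I => by simp [sum_prod_pmOne, sq, mul_comm]
  simp_rw [hexpand]
  rw [Finset.sum_comm]
  simp_rw [Finset.sum_comm (γ := Fin n → Bool), ← Finset.mul_sum, hdiag, ← Finset.mul_sum]

end Hypercube

section Bonami

variable {n : ℕ}

def dropCoeff (a : Finset (Fin n) → ℝ) (i : Fin n) (I : Finset (Fin n)) : ℝ :=
  if i ∈ I then 0 else a I

def linkCoeff (a : Finset (Fin n) → ℝ) (i : Fin n) (I : Finset (Fin n)) : ℝ :=
  if i ∈ I then 0 else a (insert i I)

lemma sum_finset_eq_sum_powerset_erase {α M : Type*} [Fintype α] [DecidableEq α]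
    [AddCommMonoid M] (i : α) (F : Finset α → M) :
    ∑ I, F I = ∑ I ∈ (univ.erase i).powerset, (F I + F (insert i I)) := by
  rw [Finset.sum_add_distrib, ← Finset.sum_powerset_insert (Finset.notMem_erase i univ),
    Finset.insert_erase (mem_univ i), Finset.powerset_univ]

lemma mlEvalCube_eq_dropCoeff_add_linkCoeff (a : Finset (Fin n) → ℝ) (i : Fin n)
    (x : Fin n → Bool) :
    mlEvalCube a x = mlEvalCube (dropCoeff a i) x + pmOne (x i) * mlEvalCube (linkCoeff a i) x := by
  simp only [mlEvalCube, mlEval, sum_finset_eq_sum_powerset_erase (M := ℝ) i, Finset.mul_sum,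
    ← Finset.sum_add_distrib]
  refine Finset.sum_congr rfl fun I hI => ?_
  have hiI : i ∉ I := fun h => Finset.notMem_erase i univ (Finset.mem_powerset.mp hI h)
  simp only [dropCoeff, linkCoeff, hiI, Finset.mem_insert_self, if_true, if_false,
    Finset.prod_insert hiI]
  ring

lemma mlEvalCube_update_eq {c : Finset (Fin n) → ℝ} {i : Fin n} (hc : ∀ I, i ∈ I → c I = 0)
    (x : Fin n → Bool) (b : Bool) : mlEvalCube c (Function.update x i b) = mlEvalCube c x := by
  simp only [mlEvalCube, mlEval]
  refine Finset.sum_congr rfl fun I _ => ?_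
  by_cases hiI : i ∈ I
  · simp [hc I hiI]
  · exact congrArg _ <| Finset.prod_congr rfl fun k hk => by
      rw [Function.update_of_ne (ne_of_mem_of_not_mem hk hiI)]

lemma dropCoeff_support {a : Finset (Fin n) → ℝ} {i : Fin n} {t : Finset (Fin n)} {d : ℕ}
    (ha : ∀ I, a I ≠ 0 → I ⊆ insert i t ∧ I.card ≤ d) (I : Finset (Fin n))
    (hI : dropCoeff a i I ≠ 0) : I ⊆ t ∧ I.card ≤ d := by
  have hiI : i ∉ I := fun h => hI (if_pos h)
  obtain ⟨hsub, hcard⟩ := ha I (by rwa [dropCoeff, if_neg hiI] at hI)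
  exact ⟨(Finset.subset_insert_iff_of_notMem hiI).mp hsub, hcard⟩

lemma linkCoeff_support {a : Finset (Fin n) → ℝ} {i : Fin n} {t : Finset (Fin n)} {d : ℕ}
    (ha : ∀ I, a I ≠ 0 → I ⊆ insert i t ∧ I.card ≤ d + 1) (I : Finset (Fin n))
    (hI : linkCoeff a i I ≠ 0) : I ⊆ t ∧ I.card ≤ d := by
  have hiI : i ∉ I := fun h => hI (if_pos h)
  obtain ⟨hsub, hcard⟩ := ha (insert i I) (by rwa [linkCoeff, if_neg hiI] at hI)
  rw [Finset.card_insert_of_notMem hiI] at hcard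
  exact ⟨(Finset.subset_insert_iff_of_notMem hiI).mp ((Finset.subset_insert i I).trans hsub),
    by omega⟩

lemma sum_add_pmOne_mul_sq {i : Fin n} {g h : (Fin n → Bool) → ℝ}
    (hg : ∀ x b, g (Function.update x i b) = g x) (hh : ∀ x b, h (Function.update x i b) = h x) :
    ∑ x, (g x + pmOne (x i) * h x) ^ 2 = ∑ x, g x ^ 2 + ∑ x, h x ^ 2 := by
  have hodd := sum_pmOne_mul_eq_zero i (fun x => 2 * g x * h x) fun x b => by simp only [hg, hh]
  have hpt : ∀ x, (g x + pmOne (x i) * h x) ^ 2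
      = g x ^ 2 + h x ^ 2 + pmOne (x i) * (2 * g x * h x) := fun x => by
    linear_combination h x ^ 2 * pmOne_mul_self (x i)
  simp only [hpt, Finset.sum_add_distrib, hodd, add_zero]

lemma sum_add_pmOne_mul_pow_four {i : Fin n} {g h : (Fin n → Bool) → ℝ}
    (hg : ∀ x b, g (Function.update x i b) = g x) (hh : ∀ x b, h (Function.update x i b) = h x) :
    ∑ x, (g x + pmOne (x i) * h x) ^ 4
      = ∑ x, g x ^ 4 + 6 * ∑ x, g x ^ 2 * h x ^ 2 + ∑ x, h x ^ 4 := by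
  have hodd := sum_pmOne_mul_eq_zero i (fun x => 4 * g x ^ 3 * h x + 4 * g x * h x ^ 3)
    fun x b => by simp only [hg, hh]
  have hpt : ∀ x, (g x + pmOne (x i) * h x) ^ 4 = g x ^ 4 + 6 * (g x ^ 2 * h x ^ 2) + h x ^ 4
      + pmOne (x i) * (4 * g x ^ 3 * h x + 4 * g x * h x ^ 3) := fun x => by
    linear_combination (6 * g x ^ 2 * h x ^ 2 + 4 * g x * h x ^ 3 * pmOne (x i)
      + h x ^ 4 * (pmOne (x i) ^ 2 + 1)) * pmOne_mul_self (x i)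
  simp only [hpt, Finset.sum_add_distrib, hodd, add_zero, Finset.mul_sum]

lemma mul_sum_sq_mul_sq_le {ι : Type*} (s : Finset ι) (f g : ι → ℝ) {N p q : ℝ} (hN : 0 ≤ N)
    (hp : 0 ≤ p) (hq : 0 ≤ q)
    (hf : N * ∑ i ∈ s, f i ^ 4 ≤ p ^ 2 * (∑ i ∈ s, f i ^ 2) ^ 2)
    (hg : N * ∑ i ∈ s, g i ^ 4 ≤ q ^ 2 * (∑ i ∈ s, g i ^ 2) ^ 2) :
    N * ∑ i ∈ s, f i ^ 2 * g i ^ 2 ≤ p * q * ((∑ i ∈ s, f i ^ 2) * ∑ i ∈ s, g i ^ 2) := by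
  have hcs := Finset.sum_mul_sq_le_sq_mul_sq s (fun i => f i ^ 2) fun i => g i ^ 2
  simp only [← pow_mul] at hcs
  refine (pow_le_pow_iff_left₀ (by positivity) (by positivity) two_ne_zero).mp ?_
  calc (N * ∑ i ∈ s, f i ^ 2 * g i ^ 2) ^ 2
      = N ^ 2 * (∑ i ∈ s, f i ^ 2 * g i ^ 2) ^ 2 := by ring
    _ ≤ N ^ 2 * ((∑ i ∈ s, f i ^ 4) * ∑ i ∈ s, g i ^ 4) := by gcongr
    _ = (N * ∑ i ∈ s, f i ^ 4) * (N * ∑ i ∈ s, g i ^ 4) := by ring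
    _ ≤ (p ^ 2 * (∑ i ∈ s, f i ^ 2) ^ 2) * (q ^ 2 * (∑ i ∈ s, g i ^ 2) ^ 2) :=
      mul_le_mul hf hg (by positivity) (by positivity)
    _ = (p * q * ((∑ i ∈ s, f i ^ 2) * ∑ i ∈ s, g i ^ 2)) ^ 2 := by ring

lemma nine_pow_eq_sq (d : ℕ) : (9 : ℝ) ^ d = (3 ^ d) ^ 2 := by
  rw [← pow_mul, mul_comm, pow_mul]; norm_num

lemma sum_mlEvalCube_pow_four_le_of_support_eq_empty {a : Finset (Fin n) → ℝ}
    (ha : ∀ I, a I ≠ 0 → I = ∅) (d : ℕ) :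
    2 ^ n * ∑ x, mlEvalCube a x ^ 4 ≤ 9 ^ d * (∑ x, mlEvalCube a x ^ 2) ^ 2 := by
  have hconst : ∀ x, mlEvalCube a x = a ∅ := fun x => by
    rw [mlEvalCube, mlEval, Finset.sum_eq_single ∅ (fun I _ hI => ?_) (by simp)]
    · simp
    · rw [not_not.mp (mt (ha I) hI), zero_mul]
  simp only [hconst, Finset.sum_const, Finset.card_univ, Fintype.card_fun, Fintype.card_bool,
    Fintype.card_fin, nsmul_eq_mul]
  push_cast
  calc (2 : ℝ) ^ n * (2 ^ n * a ∅ ^ 4) = 1 * (2 ^ n * a ∅ ^ 2) ^ 2 := by ring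
    _ ≤ 9 ^ d * (2 ^ n * a ∅ ^ 2) ^ 2 := by gcongr; exact one_le_pow₀ (by norm_num)

theorem sum_mlEvalCube_pow_four_le_of_support_subset (s : Finset (Fin n)) (d : ℕ)
    (a : Finset (Fin n) → ℝ) (ha : ∀ I, a I ≠ 0 → I ⊆ s ∧ I.card ≤ d) :
    2 ^ n * ∑ x, mlEvalCube a x ^ 4 ≤ 9 ^ d * (∑ x, mlEvalCube a x ^ 2) ^ 2 := by
  induction s using Finset.induction_on generalizing d a with
  | empty =>
    exact sum_mlEvalCube_pow_four_le_of_support_eq_empty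
      (fun I hI => Finset.subset_empty.mp (ha I hI).1) d
  | @insert i t _ IH =>
    obtain _ | e := d
    · exact IH 0 a fun I hI => ⟨by simp [Finset.card_eq_zero.mp (Nat.le_zero.mp (ha I hI).2)],
        (ha I hI).2⟩
    set g := mlEvalCube (dropCoeff a i)
    set h := mlEvalCube (linkCoeff a i)
    have hg := mlEvalCube_update_eq (c := dropCoeff a i) fun I hI => if_pos hI
    have hh := mlEvalCube_update_eq (c := linkCoeff a i) fun I hI => if_pos hI
    have hdrop := IH (e + 1) _ (dropCoeff_support ha)
    have hlink := IH e _ (linkCoeff_support ha)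
    have hcross := mul_sum_sq_mul_sq_le univ g h (by positivity) (by positivity) (by positivity)
      (nine_pow_eq_sq (e + 1) ▸ hdrop) (nine_pow_eq_sq e ▸ hlink)
    simp only [mlEvalCube_eq_dropCoeff_add_linkCoeff a i, sum_add_pmOne_mul_pow_four hg hh,
      sum_add_pmOne_mul_sq hg hh]
    have h3 : (3 : ℝ) ^ (e + 1) * 3 ^ e = 3 * 9 ^ e := by
      rw [nine_pow_eq_sq, pow_succ]; ring
    rw [h3] at hcross
    -- `9^(e+1) A² + 6 · 3 · 9^e A B + 9^e B² ≤ 9^(e+1) (A + B)²`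
    rw [pow_succ] at hdrop ⊢
    nlinarith [mul_nonneg (pow_nonneg (by norm_num : (0 : ℝ) ≤ 9) e) (sq_nonneg (∑ x, h x ^ 2))]

/-- Bonami's lemma `E[f⁴] ≤ 9^d E[f²]²`, with expectations written as sums over the `2^n`
points of the cube. -/
theorem sum_mlEvalCube_pow_four_le {d : ℕ} {a : Finset (Fin n) → ℝ} (ha : DegLE a d) :
    2 ^ n * ∑ x, mlEvalCube a x ^ 4 ≤ 9 ^ d * (∑ x, mlEvalCube a x ^ 2) ^ 2 :=
  sum_mlEvalCube_pow_four_le_of_support_subset univ d a fun I hI => ⟨subset_univ I, ha I hI⟩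

end Bonami

section Restriction

variable {n : ℕ}

/-- The coefficients of the polynomial `Q_J` in the first `K` variables. -/
def restPolyCoeff (a : Finset (Fin n) → ℝ) (K : ℕ) (J S : Finset (Fin n)) : ℝ :=
  if (∀ i ∈ J, K ≤ i.val) ∧ (∀ i ∈ S, i.val < K) then a (S ∪ J) else 0

lemma filter_lt_union_filter_le (K : ℕ) (I : Finset (Fin n)) :
    I.filter (fun i => i.val < K) ∪ I.filter (fun i => K ≤ i.val) = I := by
  ext i; simp only [Finset.mem_union, Finset.mem_filter]; grind

lemma filter_lt_union_of_lt_of_le {K : ℕ} {S J : Finset (Fin n)} (hS : ∀ i ∈ S, i.val < K)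
    (hJ : ∀ i ∈ J, K ≤ i.val) : (S ∪ J).filter (fun i => i.val < K) = S := by
  ext i; simp only [Finset.mem_union, Finset.mem_filter]; grind

lemma filter_le_union_of_lt_of_le {K : ℕ} {S J : Finset (Fin n)} (hS : ∀ i ∈ S, i.val < K)
    (hJ : ∀ i ∈ J, K ≤ i.val) : (S ∪ J).filter (fun i => K ≤ i.val) = J := by
  ext i; simp only [Finset.mem_union, Finset.mem_filter]; grind

lemma sum_filter_le_eq_sum_union (K : ℕ) {J : Finset (Fin n)} (hJ : ∀ i ∈ J, K ≤ i.val)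
    (F : Finset (Fin n) → ℝ) :
    ∑ I with I.filter (fun i => K ≤ i.val) = J, F I
      = ∑ S with ∀ i ∈ S, i.val < K, F (S ∪ J) := by
  refine Finset.sum_nbij' (fun I => I.filter fun i => i.val < K) (fun S => S ∪ J) ?_ ?_ ?_ ?_ ?_
    <;> simp only [Finset.mem_filter, Finset.mem_univ, true_and]
  · exact fun _ _ _ hi => hi.2
  · exact fun S hS => filter_le_union_of_lt_of_le hS hJ
  · rintro I rfl
    exact filter_lt_union_filter_le K I
  · exact fun S hS => filter_lt_union_of_lt_of_le hS hJ
  · rintro I rfl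
    rw [filter_lt_union_filter_le]

lemma restCoeff_eq_mlEval (a : Finset (Fin n) → ℝ) (K : ℕ) (y : Fin n → ℝ)
    (J : Finset (Fin n)) : restCoeff a K y J = mlEval (restPolyCoeff a K J) y := by
  unfold restCoeff mlEval restPolyCoeff
  split_ifs with hJ
  · rw [sum_filter_le_eq_sum_union K hJ, Finset.sum_filter]
    refine Finset.sum_congr rfl fun S _ => ?_
    by_cases hS : ∀ i ∈ S, i.val < K
    · rw [if_pos hS, if_pos ⟨hJ, hS⟩, filter_lt_union_of_lt_of_le hS hJ]
    · rw [if_neg hS, if_neg fun h => hS h.2, zero_mul]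
  · simp [hJ]

lemma sum_sq_restPolyCoeff (a : Finset (Fin n) → ℝ) (K : ℕ) (J : Finset (Fin n)) :
    ∑ S, restPolyCoeff a K J S ^ 2 = ∑ I with I.filter (fun i => K ≤ i.val) = J, a I ^ 2 := by
  by_cases hJ : ∀ i ∈ J, K ≤ i.val
  · rw [sum_filter_le_eq_sum_union K hJ, Finset.sum_filter]
    refine Finset.sum_congr rfl fun S _ => ?_
    by_cases hS : ∀ i ∈ S, i.val < K
    · rw [restPolyCoeff, if_pos ⟨hJ, hS⟩, if_pos hS]
    · rw [restPolyCoeff, if_neg fun h => hS h.2, if_neg hS, sq, zero_mul]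
  · refine (Finset.sum_eq_zero fun S _ => by simp [restPolyCoeff, hJ]).trans
      (Finset.sum_eq_zero fun I hI => absurd ?_ hJ).symm
    rw [← (Finset.mem_filter.mp hI).2]
    exact fun i hi => (Finset.mem_filter.mp hi).2

lemma wsq_eq_sum_sum_sq_restPolyCoeff (a : Finset (Fin n) → ℝ) {K : ℕ} {j : Fin n}
    (hj : K ≤ j.val) : wsq a j = ∑ J with j ∈ J, ∑ S, restPolyCoeff a K J S ^ 2 := by
  simp only [sum_sq_restPolyCoeff, wsq]
  rw [← Finset.sum_fiberwise_of_maps_to (g := fun I => I.filter fun i => K ≤ i.val)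
    (t := univ.filter (j ∈ ·)) fun I hI => by simp_all]
  refine Finset.sum_congr rfl fun J hJ => ?_
  rw [Finset.filter_filter]
  refine Finset.sum_congr (Finset.filter_congr fun I _ => ?_) fun _ _ => rfl
  grind

lemma degLE_restPolyCoeff {a : Finset (Fin n) → ℝ} {d : ℕ} (hdeg : DegLE a d) (K : ℕ)
    (J : Finset (Fin n)) : DegLE (restPolyCoeff a K J) d := by
  intro S hS
  unfold restPolyCoeff at hS
  split_ifs at hS
  · exact (Finset.card_le_card Finset.subset_union_left).trans (hdeg _ hS)
  · exact absurd rfl hS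

end Restriction

theorem sum_sq_sum_sq_mlEvalCube_le {n d : ℕ} {ι : Type*} (T : Finset ι)
    (c : ι → Finset (Fin n) → ℝ) (hc : ∀ J ∈ T, DegLE (c J) d) :
    2 ^ n * ∑ x, (∑ J ∈ T, mlEvalCube (c J) x ^ 2) ^ 2
      ≤ 9 ^ d * (∑ J ∈ T, ∑ x, mlEvalCube (c J) x ^ 2) ^ 2 := by
  have hpair : ∀ J ∈ T, ∀ J' ∈ T, 2 ^ n * ∑ x, mlEvalCube (c J) x ^ 2 * mlEvalCube (c J') x ^ 2
      ≤ 9 ^ d * ((∑ x, mlEvalCube (c J) x ^ 2) * ∑ x, mlEvalCube (c J') x ^ 2) :=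
    fun J hJ J' hJ' => by
      rw [nine_pow_eq_sq, sq (3 ^ d)]
      exact mul_sum_sq_mul_sq_le univ _ _ (by positivity) (by positivity) (by positivity)
        (nine_pow_eq_sq d ▸ sum_mlEvalCube_pow_four_le (hc J hJ))
        (nine_pow_eq_sq d ▸ sum_mlEvalCube_pow_four_le (hc J' hJ'))
  have hexpand : ∑ x, (∑ J ∈ T, mlEvalCube (c J) x ^ 2) ^ 2
      = ∑ J ∈ T, ∑ J' ∈ T, ∑ x, mlEvalCube (c J) x ^ 2 * mlEvalCube (c J') x ^ 2 := by
    simp only [sq (∑ J ∈ T, _), Finset.sum_mul_sum]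
    rw [Finset.sum_comm]
    exact Finset.sum_congr rfl fun J _ => Finset.sum_comm
  calc 2 ^ n * ∑ x, (∑ J ∈ T, mlEvalCube (c J) x ^ 2) ^ 2
      = ∑ J ∈ T, ∑ J' ∈ T, 2 ^ n * ∑ x, mlEvalCube (c J) x ^ 2 * mlEvalCube (c J') x ^ 2 := by
        rw [hexpand, Finset.mul_sum]
        exact Finset.sum_congr rfl fun J _ => Finset.mul_sum _ _ _
    _ ≤ ∑ J ∈ T, ∑ J' ∈ T,
          9 ^ d * ((∑ x, mlEvalCube (c J) x ^ 2) * ∑ x, mlEvalCube (c J') x ^ 2) :=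
        Finset.sum_le_sum fun J hJ => Finset.sum_le_sum fun J' hJ' => hpair J hJ J' hJ'
    _ = 9 ^ d * (∑ J ∈ T, ∑ x, mlEvalCube (c J) x ^ 2) ^ 2 := by
        rw [sq, Finset.sum_mul_sum, Finset.mul_sum]
        exact Finset.sum_congr rfl fun J _ => (Finset.mul_sum _ _ _).symm

theorem expected_fourth_weight_of_restriction_general (n d K : ℕ)
    (a : Finset (Fin n) → ℝ) (hdeg : DegLE a d) (j : Fin n) (hj : K ≤ j.val) :
    (1 / 2 ^ n : ℝ) * ∑ x : Fin n → Bool,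
        (wsq (restCoeff a K (fun i => pmOne (x i))) j) ^ 2
      ≤ 9 ^ d * (wsq a j) ^ 2 := by
  have hweight : ∀ x, wsq (restCoeff a K fun i => pmOne (x i)) j
      = ∑ J with j ∈ J, mlEvalCube (restPolyCoeff a K J) x ^ 2 := fun x => by
    simp only [wsq, restCoeff_eq_mlEval, mlEvalCube]
  have hparseval : ∑ J with j ∈ J, ∑ x, mlEvalCube (restPolyCoeff a K J) x ^ 2
      = 2 ^ n * wsq a j := by
    simp only [sum_mlEvalCube_sq, ← Finset.mul_sum, wsq_eq_sum_sum_sq_restPolyCoeff a hj]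
  have hmoment := sum_sq_sum_sq_mlEvalCube_le (univ.filter (j ∈ ·)) (restPolyCoeff a K)
    fun J _ => degLE_restPolyCoeff hdeg K J
  rw [hparseval] at hmoment
  simp only [hweight]
  rw [one_div, inv_mul_le_iff₀ (by positivity)]
  refine le_of_mul_le_mul_left ?_ (by positivity : (0 : ℝ) < 2 ^ n)
  linarith

/-- restricting the first `K` variables of a degree-`d` multilinear
polynomial `P` to a uniformly random `x ∈ {-1,1}^K`, the fourth power of the weight of
any coordinate `j > K` of the restricted polynomial satisfies
`E_X[w_j⁴(P_X)] ≤ 9^d w_j⁴(P)`. -/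
theorem expected_fourth_weight_of_restriction (n d K : ℕ) (hK1 : 1 ≤ K) (hKn : K < n)
    (a : Finset (Fin n) → ℝ) (hdeg : DegLE a d) (j : Fin n) (hj : K ≤ j.val) :
    (1 / 2 ^ n : ℝ) * ∑ x : Fin n → Bool,
        (wsq (restCoeff a K (fun i => pmOne (x i))) j) ^ 2
      ≤ 9 ^ d * (wsq a j) ^ 2 :=
  expected_fourth_weight_of_restriction_general n d K a hdeg j hj

end
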